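/- arXiv:1801.01074 — 6 statements merged into one kernel-verified Lean document; each statement's English description precedes it below -/
import Mathlib

section
/- Any k-uniform hypergraph H on n ≥ k vertices in which every (k-1)-set of vertices has codegree strictly greater than (n-k)/2 is hypergraph connected, i.e., every two (k-1)-sets of vertices are joined by a tight walk (a sequence of edges in which consecutive edges share k-1 vertices, with the first edge containing the first set and the last edge containing the second set). -/
/-!
Tight walks between edges are the reflexive-transitive closure of tight adjacency, and any
two edges through a common `(k-1)`-set are equal or tightly adjacent. Exchanging one vertex
at a time, it therefore suffices to join `S + a` to `S + b` for a `(k-2)`-set `S`. Either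
`S + a + b` is an edge, or the neighbourhoods of `S + a` and `S + b` both avoid `S + a + b`;
then they lie in a set of `n - k` vertices and, each having more than `(n - k)/2` elements,
share a vertex `v`, and `S + a + v`, `S + b + v` meet in the `(k-1)`-set `S + v`.
-/

open Finset

/-- A tight walk in a `k`-uniform hypergraph with edge set `E`: a nonempty sequence of
edges in which consecutive edges share `k-1` vertices. -/
def IsTightWalk {V : Type*} [DecidableEq V] (E : Finset (Finset V)) (k : ℕ)
    (W : List (Finset V)) : Prop :=
  W ≠ [] ∧ (∀ e ∈ W, e ∈ E) ∧ W.Chain' (fun e f => (e ∩ f).card = k - 1)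

open Relation

namespace Hypergraph

variable {V : Type*} [DecidableEq V] {E : Finset (Finset V)} {k : ℕ}

def TightAdj (E : Finset (Finset V)) (k : ℕ) (e f : Finset V) : Prop :=
  e ∈ E ∧ f ∈ E ∧ (e ∩ f).card = k - 1

theorem exists_isTightWalk_of_reflTransGen {e f : Finset V} (he : e ∈ E)
    (h : ReflTransGen (TightAdj E k) e f) :
    ∃ W, IsTightWalk E k W ∧ W.head? = some e ∧ W.getLast? = some f := by
  induction h with
  | refl => exact ⟨[e], ⟨by simp, by simpa, List.isChain_singleton _⟩, rfl, rfl⟩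
  | @tail g g' _ hadj ih =>
    obtain ⟨W, ⟨hne, hmem, hchain⟩, hhead, hlast⟩ := ih
    refine ⟨W ++ [g'], ⟨by simp, ?_, ?_⟩, by simpa [List.head?_append_of_ne_nil _ hne], by simp⟩
    · intro x hx
      rcases List.mem_append.1 hx with hx | hx
      · exact hmem x hx
      · exact List.mem_singleton.1 hx ▸ hadj.2.1
    · refine hchain.append (List.isChain_singleton _) ?_
      simpa [hlast] using hadj.2.2

theorem card_inter_of_card_eq_of_subset_inter {e f S : Finset V} (he : e.card = k)
    (hf : f.card = k) (hS : S.card = k - 1) (hSef : S ⊆ e ∩ f) (hne : e ≠ f) :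
    (e ∩ f).card = k - 1 := by
  have hlt : (e ∩ f).card < k := by
    refine he ▸ card_lt_card (inter_subset_left.ssubset_of_ne fun h => hne ?_)
    exact eq_of_subset_of_card_le (h ▸ inter_subset_right) (by omega)
  have := card_le_card hSef
  omega

theorem reflTransGen_tightAdj_of_subset (hunif : ∀ e ∈ E, e.card = k) {e f S : Finset V}
    (he : e ∈ E) (hf : f ∈ E) (hS : S.card = k - 1) (hSe : S ⊆ e) (hSf : S ⊆ f) :
    ReflTransGen (TightAdj E k) e f := by
  rcases eq_or_ne e f with rfl | hne
  · exact .refl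
  · exact .single ⟨he, hf, card_inter_of_card_eq_of_subset_inter (hunif e he) (hunif f hf) hS
      (subset_inter hSe hSf) hne⟩

variable [Fintype V]

def neighborFinset (E : Finset (Finset V)) (S : Finset V) : Finset V :=
  univ.filter fun v => insert v S ∈ E

theorem exists_superset_mem_of_card_lt {S : Finset V} (hn : k ≤ Fintype.card V)
    (hS : ((Fintype.card V : ℚ) - k) / 2 < (neighborFinset E S).card) :
    ∃ e ∈ E, S ⊆ e := by
  have : (neighborFinset E S).Nonempty := by
    rw [← card_pos, ← Nat.cast_pos (α := ℚ)]
    have : (k : ℚ) ≤ Fintype.card V := by exact_mod_cast hn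
    linarith
  obtain ⟨v, hv⟩ := this
  exact ⟨insert v S, (mem_filter.1 hv).2, subset_insert v S⟩

theorem neighborFinset_subset_compl (hunif : ∀ e ∈ E, e.card = k) {A : Finset V} {b : V}
    (hA : A.card = k - 1) (hA0 : A.Nonempty) (hbA : insert b A ∉ E) :
    neighborFinset E A ⊆ (insert b A)ᶜ := by
  intro v hv
  replace hv := (mem_filter.1 hv).2
  rw [mem_compl, mem_insert]
  rintro (rfl | hvA)
  · exact hbA hv
  · have := hunif _ hv
    rw [insert_eq_of_mem hvA] at this
    have := hA0.card_pos
    omega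

theorem exists_reflTransGen_of_insert (hunif : ∀ e ∈ E, e.card = k)
    (hcod : ∀ S : Finset V, S.card = k - 1 →
      ((Fintype.card V : ℚ) - k) / 2 < (neighborFinset E S).card)
    {S : Finset V} {a b : V} (hS : S.card + 2 = k) (ha : a ∉ S) (hb : b ∉ S) (hab : a ≠ b) :
    ∃ e ∈ E, ∃ f ∈ E, insert a S ⊆ e ∧ insert b S ⊆ f ∧ ReflTransGen (TightAdj E k) e f := by
  have hT : (insert b (insert a S)).card = k := by
    rw [card_insert_of_notMem (by simp [hab.symm, hb]), card_insert_of_notMem ha]; omega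
  by_cases hTE : insert b (insert a S) ∈ E
  · exact ⟨_, hTE, _, hTE, subset_insert b _, insert_subset_insert b (subset_insert a S), .refl⟩
  have hcard : ∀ c ∉ S, (insert c S).card = k - 1 := fun c hc => by
    rw [card_insert_of_notMem hc]; omega
  have hNa := neighborFinset_subset_compl hunif (hcard a ha) (insert_nonempty a S) hTE
  have hNb := neighborFinset_subset_compl hunif (hcard b hb) (insert_nonempty b S) (b := a)
    (by rwa [insert_comm])
  rw [insert_comm] at hNb
  obtain ⟨v, hv⟩ := inter_nonempty_of_card_lt_card_add_card hNa hNb <| by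
    have h := add_lt_add (hcod _ (hcard a ha)) (hcod _ (hcard b hb))
    have hk : k ≤ Fintype.card V := hT ▸ card_le_univ _
    rw [card_compl, hT, ← Nat.cast_lt (α := ℚ), Nat.cast_sub hk]
    push_cast
    linarith
  rw [mem_inter] at hv
  have hvS : v ∉ S := fun h => mem_compl.1 (hNa hv.1) (by simp [h])
  refine ⟨_, (mem_filter.1 hv.1).2, _, (mem_filter.1 hv.2).2, subset_insert _ _,
    subset_insert _ _, reflTransGen_tightAdj_of_subset hunif (mem_filter.1 hv.1).2
    (mem_filter.1 hv.2).2 (hcard v hvS) ?_ ?_⟩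
  all_goals exact insert_subset_insert v (subset_insert _ S)

theorem reflTransGen_tightAdj_of_codegree (hunif : ∀ e ∈ E, e.card = k)
    (hcod : ∀ S : Finset V, S.card = k - 1 →
      ((Fintype.card V : ℚ) - k) / 2 < (neighborFinset E S).card)
    {A B e f : Finset V} (hA : A.card = k - 1) (hB : B.card = k - 1) (he : e ∈ E) (hf : f ∈ E)
    (hAe : A ⊆ e) (hBf : B ⊆ f) : ReflTransGen (TightAdj E k) e f := by
  induction hm : (B \ A).card using Nat.strong_induction_on generalizing A e with
  | _ m ih =>
    obtain hBA | ⟨b, hb⟩ := (B \ A).eq_empty_or_nonempty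
    · have hAB : A = B :=
        (eq_of_subset_of_card_le (sdiff_eq_empty_iff_subset.1 hBA) (by omega)).symm
      exact reflTransGen_tightAdj_of_subset hunif he hf hA hAe (hAB ▸ hBf)
    obtain ⟨a, ha⟩ : (A \ B).Nonempty := by
      rw [← card_pos, card_sdiff_comm (hA.trans hB.symm)]; exact card_pos.2 ⟨b, hb⟩
    rw [mem_sdiff] at ha hb
    have hbA : b ∉ A.erase a := fun h => hb.2 (mem_of_mem_erase h)
    have hAa : (A.erase a).card + 2 = k := by
      have := card_pos.2 ⟨a, ha.1⟩
      rw [card_erase_of_mem ha.1]; omega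
    obtain ⟨e₀, he₀, g, hg, hAe₀, hA'g, hstep⟩ := exists_reflTransGen_of_insert hunif hcod hAa
      (notMem_erase a A) hbA (fun h => hb.2 (h ▸ ha.1))
    rw [insert_erase ha.1] at hAe₀
    have hsub : B \ insert b (A.erase a) ⊆ (B \ A).erase b := by
      intro x hx
      simp only [mem_sdiff, mem_insert, mem_erase, not_or] at hx ⊢
      exact ⟨hx.2.1, hx.1, fun hxA => hx.2.2 ⟨fun h => ha.2 (h ▸ hx.1), hxA⟩⟩
    have hlt : (B \ insert b (A.erase a)).card < m :=
      hm ▸ (card_le_card hsub).trans_lt (card_erase_lt_of_mem (mem_sdiff.2 hb))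
    exact (reflTransGen_tightAdj_of_subset hunif he he₀ hA hAe hAe₀).trans <| hstep.trans <|
      ih _ hlt (by rw [card_insert_of_notMem hbA]; omega) hg hA'g rfl

end Hypergraph

open Hypergraph

theorem stmt0_general {V : Type*} [Fintype V] [DecidableEq V] (k : ℕ)
    (hn : k ≤ Fintype.card V) (E : Finset (Finset V))
    (hunif : ∀ e ∈ E, e.card = k)
    (hcod : ∀ S : Finset V, S.card = k - 1 →
      ((Fintype.card V : ℚ) - (k : ℚ)) / 2 <
        ((Finset.univ.filter (fun v => insert v S ∈ E)).card : ℚ)) :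
    ∀ A B : Finset V, A.card = k - 1 → B.card = k - 1 →
      ∃ W : List (Finset V), IsTightWalk E k W ∧
        (∃ e₁, W.head? = some e₁ ∧ A ⊆ e₁) ∧
        (∃ e₂, W.getLast? = some e₂ ∧ B ⊆ e₂) := by
  intro A B hA hB
  obtain ⟨e, he, hAe⟩ := exists_superset_mem_of_card_lt hn (hcod A hA)
  obtain ⟨f, hf, hBf⟩ := exists_superset_mem_of_card_lt hn (hcod B hB)
  obtain ⟨W, hW, hhead, hlast⟩ := exists_isTightWalk_of_reflTransGen he
    (reflTransGen_tightAdj_of_codegree hunif hcod hA hB he hf hAe hBf)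
  exact ⟨W, hW, ⟨e, hhead, hAe⟩, ⟨f, hlast, hBf⟩⟩

/-- Any `k`-uniform hypergraph on `n ≥ k` vertices in which every `(k-1)`-set has codegree
strictly greater than `(n-k)/2` is hypergraph connected. -/
theorem stmt0 {V : Type*} [Fintype V] [DecidableEq V] (k : ℕ) (hk : 2 ≤ k)
    (hn : k ≤ Fintype.card V) (E : Finset (Finset V))
    (hunif : ∀ e ∈ E, e.card = k)
    (hcod : ∀ S : Finset V, S.card = k - 1 →
      ((Fintype.card V : ℚ) - (k : ℚ)) / 2 <
        ((Finset.univ.filter (fun v => insert v S ∈ E)).card : ℚ)) :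
    ∀ A B : Finset V, A.card = k - 1 → B.card = k - 1 →
      ∃ W : List (Finset V), IsTightWalk E k W ∧
        (∃ e₁, W.head? = some e₁ ∧ A ⊆ e₁) ∧
        (∃ e₂, W.getLast? = some e₂ ∧ B ⊆ e₂) :=
  stmt0_general k hn E hunif hcod
end

section
/- For every n ≥ k there exists a k-uniform hypergraph H on n vertices with minimum codegree equal to ⌊(n-k)/2⌋ which is not hypergraph connected. -/
/-!
Fix a set `W` of `⌊(n-k)/2⌋ + 1` vertices and take as edges the `k`-sets that do not meet `W` in
exactly one vertex. A `(k-1)`-set meeting `W` once extends to an edge exactly by the vertices of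
`W` outside it, so its codegree is `|W| - 1 = ⌊(n-k)/2⌋`, and every other `(k-1)`-set has at least
as many extensions. Consecutive edges of a tight walk differ in one vertex, so an edge meeting `W`
at least twice can only be followed by an edge meeting `W` at least once, hence at least twice.
A walk starting at a `(k-1)`-set that meets `W` can therefore never reach a `(k-1)`-set disjoint
from `W`.
-/

open Finset

section

variable {V : Type*} [DecidableEq V]

theorem card_inter_le_card_inter_add_card_sdiff (e f W : Finset V) :
    #(e ∩ W) ≤ #(f ∩ W) + #(e \ f) :=
  calc #(e ∩ W) ≤ #(f ∩ W ∪ e \ f) := card_le_card fun v hv => by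
        by_cases hvf : v ∈ f <;> simp_all
    _ ≤ #(f ∩ W) + #(e \ f) := card_union_le _ _

theorem card_inter_le_one_of_disjoint {B e : Finset V} (hBe : B ⊆ e) (he : #e = #B + 1)
    (hBW : Disjoint B W) : #(e ∩ W) ≤ 1 := by
  calc #(e ∩ W) ≤ #(e \ B) := card_le_card fun v hv =>
        mem_sdiff.mpr ⟨(mem_inter.mp hv).1, fun hvB => disjoint_left.mp hBW hvB (mem_inter.mp hv).2⟩
    _ = 1 := by rw [card_sdiff_of_subset hBe]; omega

end

section

variable {V : Type*} [Fintype V] [DecidableEq V]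

/-- The cardinality of `neighborFinset E S` is the codegree of `S`. -/
def neighborFinset (E : Finset (Finset V)) (S : Finset V) : Finset V :=
  {v | insert v S ∈ E}

def IsTightlyConnected (E : Finset (Finset V)) (k : ℕ) : Prop :=
  ∀ A B : Finset V, #A = k - 1 → #B = k - 1 →
    ∃ L : List (Finset V), IsTightWalk E k L ∧
      (∃ e₁, L.head? = some e₁ ∧ A ⊆ e₁) ∧ (∃ e₂, L.getLast? = some e₂ ∧ B ⊆ e₂)

def edgesNotMeetingOnce (W : Finset V) (k : ℕ) : Finset (Finset V) :=
  {e | #e = k ∧ #(e ∩ W) ≠ 1}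

variable {W S e : Finset V} {k : ℕ}

theorem mem_edgesNotMeetingOnce : e ∈ edgesNotMeetingOnce W k ↔ #e = k ∧ #(e ∩ W) ≠ 1 := by
  simp [edgesNotMeetingOnce]

theorem mem_neighborFinset_edgesNotMeetingOnce (hS : #S + 1 = k) {v : V} :
    v ∈ neighborFinset (edgesNotMeetingOnce W k) S ↔ v ∉ S ∧ #(insert v S ∩ W) ≠ 1 := by
  simp only [neighborFinset, mem_filter, mem_univ, true_and, mem_edgesNotMeetingOnce]
  by_cases hv : v ∈ S
  · simp [hv, insert_eq_of_mem, ← hS]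
  · simp [hv, card_insert_of_notMem, hS]

theorem neighborFinset_of_disjoint (hS : #S + 1 = k) (hSW : Disjoint S W) :
    neighborFinset (edgesNotMeetingOnce W k) S = (S ∪ W)ᶜ := by
  ext v
  rw [mem_neighborFinset_edgesNotMeetingOnce hS, mem_compl, mem_union, not_or]
  by_cases hvW : v ∈ W
  · simp [insert_inter_of_mem hvW, disjoint_iff_inter_eq_empty.mp hSW, hvW]
  · simp [insert_inter_of_notMem hvW, disjoint_iff_inter_eq_empty.mp hSW, hvW]

theorem neighborFinset_of_card_inter_eq_one (hS : #S + 1 = k) (hSW : #(S ∩ W) = 1) :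
    neighborFinset (edgesNotMeetingOnce W k) S = W \ S := by
  ext v
  rw [mem_neighborFinset_edgesNotMeetingOnce hS, mem_sdiff, and_comm]
  refine and_congr_left fun hvS => ?_
  by_cases hvW : v ∈ W
  · simp [insert_inter_of_mem hvW, card_insert_of_notMem (fun h => hvS (mem_inter.1 h).1), hSW,
      hvW]
  · simp [insert_inter_of_notMem hvW, hSW, hvW]

theorem card_neighborFinset_of_card_inter_eq_one (hS : #S + 1 = k) (hSW : #(S ∩ W) = 1) :
    #(neighborFinset (edgesNotMeetingOnce W k) S) = #W - 1 := by
  rw [neighborFinset_of_card_inter_eq_one hS hSW, card_sdiff, hSW]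

theorem neighborFinset_of_two_le_card_inter (hS : #S + 1 = k) (hSW : 2 ≤ #(S ∩ W)) :
    neighborFinset (edgesNotMeetingOnce W k) S = Sᶜ := by
  ext v
  rw [mem_neighborFinset_edgesNotMeetingOnce hS, mem_compl, and_iff_left_iff_imp]
  intro _
  have := card_le_card (inter_subset_inter_right (subset_insert v S) : S ∩ W ⊆ insert v S ∩ W)
  omega

theorem min_le_card_neighborFinset (hS : #S + 1 = k) :
    min (#W - 1) (Fintype.card V - #S - #W) ≤ #(neighborFinset (edgesNotMeetingOnce W k) S) := by
  obtain h | h | h : #(S ∩ W) = 0 ∨ #(S ∩ W) = 1 ∨ 2 ≤ #(S ∩ W) := by omega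
  · rw [card_eq_zero, ← disjoint_iff_inter_eq_empty] at h
    rw [neighborFinset_of_disjoint hS h, card_compl, card_union_of_disjoint h]
    omega
  · exact (card_neighborFinset_of_card_inter_eq_one hS h).symm ▸ min_le_left _ _
  · rw [neighborFinset_of_two_le_card_inter hS h, card_compl]
    omega

theorem exists_card_inter_eq_one {m : ℕ} (hW : W.Nonempty) (hm : m ≤ Fintype.card V - #W) :
    ∃ S : Finset V, #S = m + 1 ∧ #(S ∩ W) = 1 := by
  obtain ⟨x, hx⟩ := hW
  obtain ⟨T, hTW, hT⟩ := exists_subset_card_eq (s := Wᶜ) (n := m) (by rwa [card_compl])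
  have hxT : x ∉ T := fun h => mem_compl.mp (hTW h) hx
  refine ⟨insert x T, by rw [card_insert_of_notMem hxT, hT], ?_⟩
  have hTW' : T ∩ W = ∅ := disjoint_iff_inter_eq_empty.mp (subset_compl_iff_disjoint_right.mp hTW)
  rw [insert_inter_of_mem hx, hTW', insert_empty, card_singleton]

theorem two_le_card_inter_of_tight_step {e f : Finset V} (he : e ∈ edgesNotMeetingOnce W k)
    (hf : f ∈ edgesNotMeetingOnce W k) (hef : #(e ∩ f) = k - 1) (h2 : 2 ≤ #(e ∩ W)) :
    2 ≤ #(f ∩ W) := by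
  rw [mem_edgesNotMeetingOnce] at he hf
  have hek : 2 ≤ k := he.1 ▸ h2.trans (card_le_card inter_subset_left)
  have hsdiff : #(e \ f) = 1 := by
    rw [card_sdiff, inter_comm, hef, he.1]
    omega
  have := card_inter_le_card_inter_add_card_sdiff e f W
  omega

theorem IsTightWalk.two_le_card_inter {L : List (Finset V)}
    (hL : IsTightWalk (edgesNotMeetingOnce W k) k L)
    (hhead : ∀ e ∈ L.head?, (e ∩ W).Nonempty) : ∀ e ∈ L, 2 ≤ #(e ∩ W) := by
  obtain ⟨-, hmem, hchain⟩ := hL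
  refine List.IsChain.induction _ L
    (hchain.imp_of_mem_imp fun e f he hf hef => two_le_card_inter_of_tight_step
      (hmem e he) (hmem f hf) hef) (fun _ _ h => h) fun hne' => ?_
  have hnonempty := hhead _ (List.head?_eq_some_head hne')
  have hne1 := (mem_edgesNotMeetingOnce.mp (hmem _ (List.head_mem hne'))).2
  have := hnonempty.card_pos
  omega

theorem not_isTightlyConnected_edgesNotMeetingOnce (hk : 2 ≤ k) (hW : W.Nonempty)
    (hWc : k - 1 ≤ Fintype.card V - #W) : ¬ IsTightlyConnected (edgesNotMeetingOnce W k) k := by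
  intro hcon
  obtain ⟨A, hA, hAW⟩ := exists_card_inter_eq_one (m := k - 2) hW (by omega)
  obtain ⟨B, hBW, hB⟩ := exists_subset_card_eq (s := Wᶜ) (n := k - 1) (by rwa [card_compl])
  obtain ⟨L, hL, ⟨e₁, h₁, hAe₁⟩, ⟨e₂, h₂, hBe₂⟩⟩ := hcon A B (by omega) hB
  have hmeets : ∀ e ∈ L.head?, (e ∩ W).Nonempty := by
    rintro e he
    obtain rfl : e = e₁ := Option.some_injective _ (he.symm.trans h₁)
    exact (card_pos.mp (by omega)).mono (inter_subset_inter_right hAe₁)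
  have h2 := hL.two_le_card_inter hmeets e₂ (List.mem_of_getLast? h₂)
  have he₂ := (mem_edgesNotMeetingOnce.mp (hL.2.1 e₂ (List.mem_of_getLast? h₂))).1
  have := card_inter_le_one_of_disjoint hBe₂ (by omega) (subset_compl_iff_disjoint_right.mp hBW)
  omega

end

/-- For every `n ≥ k` there is a `k`-uniform hypergraph on `n` vertices with minimum
codegree equal to `⌊(n-k)/2⌋` which is not hypergraph connected. -/
theorem stmt1 (k n : ℕ) (hk : 2 ≤ k) (hn : k ≤ n) :
    ∃ E : Finset (Finset (Fin n)),
      (∀ e ∈ E, e.card = k) ∧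
      (∀ S : Finset (Fin n), S.card = k - 1 →
        (n - k) / 2 ≤ (Finset.univ.filter (fun v => insert v S ∈ E)).card) ∧
      (∃ S : Finset (Fin n), S.card = k - 1 ∧
        (Finset.univ.filter (fun v => insert v S ∈ E)).card = (n - k) / 2) ∧
      ¬ (∀ A B : Finset (Fin n), A.card = k - 1 → B.card = k - 1 →
          ∃ W : List (Finset (Fin n)), IsTightWalk E k W ∧
            (∃ e₁, W.head? = some e₁ ∧ A ⊆ e₁) ∧
            (∃ e₂, W.getLast? = some e₂ ∧ B ⊆ e₂)) := by
  obtain ⟨W, -, hW⟩ := exists_subset_card_eq (s := (univ : Finset (Fin n))) (n := (n - k) / 2 + 1)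
    (by rw [card_univ, Fintype.card_fin]; omega)
  have hWne : W.Nonempty := card_pos.mp (by omega)
  refine ⟨edgesNotMeetingOnce W k, fun e he => (mem_edgesNotMeetingOnce.mp he).1,
    fun S hS => ?_, ?_, not_isTightlyConnected_edgesNotMeetingOnce hk hWne ?_⟩
  · have := min_le_card_neighborFinset (W := W) (k := k) (S := S) (by omega)
    rw [Fintype.card_fin, hW, hS] at this
    exact le_trans (by omega) this
  · obtain ⟨S, hS, hSW⟩ := exists_card_inter_eq_one (m := k - 2) hWne
      (by rw [Fintype.card_fin]; omega)
    refine ⟨S, by omega, ?_⟩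
    change #(neighborFinset _ S) = _
    rw [card_neighborFinset_of_card_inter_eq_one (by omega) hSW, hW]
    omega
  · rw [Fintype.card_fin]; omega
end

section
/- Let H be a 3-uniform hypergraph on n vertices with minimum codegree at least ⌊n/3⌋. Then H has at most two tight components. -/
open Finset

/-- Two edges are in the same tight component of the `3`-uniform hypergraph with edge
set `E` iff they are related by the reflexive-transitive closure of the relation
"both are edges and they share exactly 2 vertices". -/
def TightRel {V : Type*} [DecidableEq V] (E : Finset (Finset V)) :
    Finset V → Finset V → Prop :=
  Relation.ReflTransGen (fun e f => e ∈ E ∧ f ∈ E ∧ (e ∩ f).card = 2)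

/-! Suppose `K₁, K₂, K₃` are three distinct tight components. If a pair `xy` lies in an edge of
`Kᵢ`, then so does every edge `xyw`, hence the pairs `xw` and `yw` lie in `Kᵢ` as well; and no
pair lies in edges of two different components. Thus the at least `⌊n/3⌋` codegree neighbours
of a pair, or the at least `⌊n/3⌋ + 1` vertices joined to `x` by pairs of `Kᵢ`, form sets that are
disjoint for different components, and three such sets inside `V` minus at most three vertices
are too large. This rules out three components meeting at a vertex, a triangle whose sides lie
in three different components, and a path `a x y b` whose three pairs lie in three different
components. Consequently the vertex sets of `K₁, K₂, K₃` are pairwise disjoint; but each has at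
least `⌊n/3⌋ + 2` vertices. -/

section

variable {V : Type*} [DecidableEq V] {E : Finset (Finset V)} {e e₁ e₂ e₃ f g : Finset V}
  {x y z w : V}

theorem card_add_card_add_card_le {α : Type*} [DecidableEq α] {A B C U : Finset α}
    (hAB : Disjoint A B) (hAC : Disjoint A C) (hBC : Disjoint B C)
    (hA : A ⊆ U) (hB : B ⊆ U) (hC : C ⊆ U) : #A + #B + #C ≤ #U := by
  rw [← card_union_of_disjoint hAB,
    ← card_union_of_disjoint (disjoint_union_left.2 ⟨hAC, hBC⟩)]
  exact card_le_card (union_subset (union_subset hA hB) hC)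

theorem ne_of_card_eq_three (h : #({x, y, z} : Finset V) = 3) : x ≠ y ∧ x ≠ z ∧ y ≠ z := by
  refine ⟨?_, ?_, ?_⟩ <;> rintro rfl <;> simp at h <;> grind [card_le_two]

namespace TightRel

theorem symm (h : TightRel E e f) : TightRel E f e := by
  induction h with
  | refl => exact .refl
  | tail _ hst ih => exact .head ⟨hst.2.1, hst.1, by rw [inter_comm]; exact hst.2.2⟩ ih

theorem trans (h₁ : TightRel E e f) (h₂ : TightRel E f g) : TightRel E e g :=
  Relation.ReflTransGen.trans h₁ h₂

theorem of_two_le_card_inter (hunif : ∀ e ∈ E, #e = 3) (hf : f ∈ E) (hg : g ∈ E)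
    (h : 2 ≤ #(f ∩ g)) : TightRel E f g := by
  rcases eq_or_ne f g with rfl | hfg
  · exact .refl
  refine .single ⟨hf, hg, le_antisymm ?_ h⟩
  by_contra! h3
  have hf' := eq_of_subset_of_card_le (inter_subset_left : f ∩ g ⊆ f) (by rw [hunif f hf]; omega)
  have hg' := eq_of_subset_of_card_le (inter_subset_right : f ∩ g ⊆ g) (by rw [hunif g hg]; omega)
  exact hfg (hf'.symm.trans hg')

theorem of_mem_of_mem (hunif : ∀ e ∈ E, #e = 3) (hf : f ∈ E) (hg : g ∈ E) (hxy : x ≠ y)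
    (hxf : x ∈ f) (hyf : y ∈ f) (hxg : x ∈ g) (hyg : y ∈ g) : TightRel E f g :=
  of_two_le_card_inter hunif hf hg <| (card_pair hxy).symm.le.trans <|
    card_le_card <| insert_subset (mem_inter.2 ⟨hxf, hxg⟩) <|
      singleton_subset_iff.2 (mem_inter.2 ⟨hyf, hyg⟩)

end TightRel

def PairInComponent (E : Finset (Finset V)) (e : Finset V) (x y : V) : Prop :=
  x ≠ y ∧ ∃ f ∈ E, x ∈ f ∧ y ∈ f ∧ TightRel E e f

namespace PairInComponent

theorem symm (h : PairInComponent E e x y) : PairInComponent E e y x :=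
  let ⟨hxy, f, hf, hx, hy, hef⟩ := h
  ⟨hxy.symm, f, hf, hy, hx, hef⟩

theorem of_tightRel (h : TightRel E e f) (hf : PairInComponent E f x y) :
    PairInComponent E e x y :=
  let ⟨hxy, g, hg, hx, hy, hfg⟩ := hf
  ⟨hxy, g, hg, hx, hy, h.trans hfg⟩

theorem tightRel (hunif : ∀ e ∈ E, #e = 3) (h₁ : PairInComponent E e₁ x y)
    (h₂ : PairInComponent E e₂ x y) : TightRel E e₁ e₂ :=
  let ⟨hxy, _, hf, hxf, hyf, h₁f⟩ := h₁
  let ⟨_, _, hg, hxg, hyg, h₂g⟩ := h₂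
  h₁f.trans ((TightRel.of_mem_of_mem hunif hf hg hxy hxf hyf hxg hyg).trans h₂g.symm)

end PairInComponent

theorem exists_pairInComponent_of_mem (he : e ∈ E) (he2 : 1 < #e) :
    ∃ x y, PairInComponent E e x y :=
  let ⟨x, hx, y, hy, hxy⟩ := one_lt_card.1 he2
  ⟨x, y, hxy, e, he, hx, hy, .refl⟩

section Fintype

variable [Fintype V]

def codegreeNbhd (E : Finset (Finset V)) (u v : V) : Finset V :=
  univ.filter fun w => ({u, v, w} : Finset V) ∈ E

open Classical in
noncomputable def componentLink (E : Finset (Finset V)) (e : Finset V) (x : V) : Finset V :=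
  univ.filter (PairInComponent E e x)

open Classical in
noncomputable def componentSupport (E : Finset (Finset V)) (e : Finset V) : Finset V :=
  univ.filter fun x => ∃ y, PairInComponent E e x y

@[simp]
theorem mem_codegreeNbhd : w ∈ codegreeNbhd E x y ↔ ({x, y, w} : Finset V) ∈ E := by
  simp [codegreeNbhd]

@[simp]
theorem mem_componentLink : y ∈ componentLink E e x ↔ PairInComponent E e x y := by
  simp [componentLink]

@[simp]
theorem mem_componentSupport : x ∈ componentSupport E e ↔ ∃ y, PairInComponent E e x y := by
  simp [componentSupport]

theorem PairInComponent.of_mem_codegreeNbhd (hunif : ∀ e ∈ E, #e = 3)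
    (h : PairInComponent E e x y) (hw : w ∈ codegreeNbhd E x y) :
    PairInComponent E e x w ∧ PairInComponent E e y w := by
  rw [mem_codegreeNbhd] at hw
  obtain ⟨hxy, hxw, hyw⟩ := ne_of_card_eq_three (hunif _ hw)
  have hef : TightRel E e {x, y, w} := h.tightRel hunif ⟨hxy, _, hw, by simp, by simp, .refl⟩
  exact ⟨⟨hxw, _, hw, by simp, by simp, hef⟩, ⟨hyw, _, hw, by simp, by simp, hef⟩⟩

theorem disjoint_componentLink (hunif : ∀ e ∈ E, #e = 3) (h : ¬TightRel E e₁ e₂) :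
    Disjoint (componentLink E e₁ x) (componentLink E e₂ x) :=
  disjoint_left.2 fun _ h₁ h₂ =>
    h ((mem_componentLink.1 h₁).tightRel hunif (mem_componentLink.1 h₂))

theorem componentLink_subset_erase : componentLink E e x ⊆ univ.erase x :=
  fun _ hy => mem_erase.2 ⟨(mem_componentLink.1 hy).1.symm, mem_univ _⟩

theorem card_componentLink (hunif : ∀ e ∈ E, #e = 3)
    (hcod : ∀ u v : V, u ≠ v → Fintype.card V / 3 ≤ #(codegreeNbhd E u v))
    (h : PairInComponent E e x y) : Fintype.card V / 3 + 1 ≤ #(componentLink E e x) := by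
  have hy : y ∉ codegreeNbhd E x y := fun hy => (h.of_mem_codegreeNbhd hunif hy).2.1 rfl
  have hsub : insert y (codegreeNbhd E x y) ⊆ componentLink E e x := by
    intro w hw
    rw [mem_componentLink]
    rcases mem_insert.1 hw with rfl | hw
    exacts [h, (h.of_mem_codegreeNbhd hunif hw).1]
  calc Fintype.card V / 3 + 1 ≤ #(codegreeNbhd E x y) + 1 := by gcongr; exact hcod x y h.1
    _ = #(insert y (codegreeNbhd E x y)) := (card_insert_of_notMem hy).symm
    _ ≤ _ := card_le_card hsub

theorem no_three_components_at_vertex (hunif : ∀ e ∈ E, #e = 3)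
    (hcod : ∀ u v : V, u ≠ v → Fintype.card V / 3 ≤ #(codegreeNbhd E u v))
    {y₁ y₂ y₃ : V} (h₁ : PairInComponent E e₁ x y₁) (h₂ : PairInComponent E e₂ x y₂)
    (h₃ : PairInComponent E e₃ x y₃) :
    TightRel E e₁ e₂ ∨ TightRel E e₁ e₃ ∨ TightRel E e₂ e₃ := by
  by_contra! h
  obtain ⟨h₁₂, h₁₃, h₂₃⟩ := h
  have hsum := card_add_card_add_card_le (U := univ.erase x) (disjoint_componentLink hunif h₁₂)
    (disjoint_componentLink hunif h₁₃) (disjoint_componentLink hunif h₂₃)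
    componentLink_subset_erase componentLink_subset_erase componentLink_subset_erase
  rw [card_erase_of_mem (mem_univ x), card_univ] at hsum
  have := card_componentLink hunif hcod h₁
  have := card_componentLink hunif hcod h₂
  have := card_componentLink hunif hcod h₃
  omega

theorem no_rainbow_triangle (hunif : ∀ e ∈ E, #e = 3)
    (hcod : ∀ u v : V, u ≠ v → Fintype.card V / 3 ≤ #(codegreeNbhd E u v))
    (h₁ : PairInComponent E e₁ x y) (h₂ : PairInComponent E e₂ x z)
    (h₃ : PairInComponent E e₃ y z) :
    TightRel E e₁ e₂ ∨ TightRel E e₁ e₃ ∨ TightRel E e₂ e₃ := by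
  by_contra! h
  obtain ⟨h₁₂, h₁₃, h₂₃⟩ := h
  have hxyz : #({x, y, z} : Finset V) = 3 := card_eq_three.2 ⟨x, y, z, h₁.1, h₂.1, h₃.1, rfl⟩
  have hU : #(univ \ {x, y, z}) + 3 = Fintype.card V := by
    rw [card_univ_sdiff, hxyz, Nat.sub_add_cancel (hxyz ▸ card_le_univ _)]
  have mem_U {w : V} (hx : w ≠ x) (hy : w ≠ y) (hz : w ≠ z) : w ∈ univ \ {x, y, z} := by
    simp [hx, hy, hz]
  have hA : codegreeNbhd E x y ⊆ univ \ {x, y, z} := fun w hw => by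
    obtain ⟨hxw, hyw⟩ := h₁.of_mem_codegreeNbhd hunif hw
    exact mem_U hxw.1.symm hyw.1.symm (by rintro rfl; exact h₁₂ (hxw.tightRel hunif h₂))
  have hB : codegreeNbhd E x z ⊆ univ \ {x, y, z} := fun w hw => by
    obtain ⟨hxw, hzw⟩ := h₂.of_mem_codegreeNbhd hunif hw
    exact mem_U hxw.1.symm (by rintro rfl; exact h₁₂ (h₁.tightRel hunif hxw)) hzw.1.symm
  have hC : codegreeNbhd E y z ⊆ univ \ {x, y, z} := fun w hw => by
    obtain ⟨hyw, hzw⟩ := h₃.of_mem_codegreeNbhd hunif hw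
    exact mem_U (by rintro rfl; exact h₁₃ (h₁.symm.tightRel hunif hyw)) hyw.1.symm hzw.1.symm
  have hAB : Disjoint (codegreeNbhd E x y) (codegreeNbhd E x z) := disjoint_left.2
    fun _ hA hB => h₁₂ ((h₁.of_mem_codegreeNbhd hunif hA).1.tightRel hunif
      (h₂.of_mem_codegreeNbhd hunif hB).1)
  have hAC : Disjoint (codegreeNbhd E x y) (codegreeNbhd E y z) := disjoint_left.2
    fun _ hA hC => h₁₃ ((h₁.of_mem_codegreeNbhd hunif hA).2.tightRel hunif
      (h₃.of_mem_codegreeNbhd hunif hC).1)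
  have hBC : Disjoint (codegreeNbhd E x z) (codegreeNbhd E y z) := disjoint_left.2
    fun _ hB hC => h₂₃ ((h₂.of_mem_codegreeNbhd hunif hB).2.tightRel hunif
      (h₃.of_mem_codegreeNbhd hunif hC).2)
  have := card_add_card_add_card_le hAB hAC hBC hA hB hC
  have := hcod x y h₁.1
  have := hcod x z h₂.1
  have := hcod y z h₃.1
  omega

theorem no_rainbow_path (hunif : ∀ e ∈ E, #e = 3)
    (hcod : ∀ u v : V, u ≠ v → Fintype.card V / 3 ≤ #(codegreeNbhd E u v)) {a b : V}
    (h₁ : PairInComponent E e₁ x y) (h₂ : PairInComponent E e₂ x a)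
    (h₃ : PairInComponent E e₃ y b) :
    TightRel E e₁ e₂ ∨ TightRel E e₁ e₃ ∨ TightRel E e₂ e₃ := by
  by_contra! h
  obtain ⟨h₁₂, h₁₃, h₂₃⟩ := h
  have hU : #(univ \ {x, y}) + 2 = Fintype.card V := by
    rw [card_univ_sdiff, card_pair h₁.1, Nat.sub_add_cancel (card_pair h₁.1 ▸ card_le_univ _)]
  have mem_U {w : V} (hx : w ≠ x) (hy : w ≠ y) : w ∈ univ \ {x, y} := by simp [hx, hy]
  have hA : codegreeNbhd E x y ⊆ univ \ {x, y} := fun w hw => by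
    obtain ⟨hxw, hyw⟩ := h₁.of_mem_codegreeNbhd hunif hw
    exact mem_U hxw.1.symm hyw.1.symm
  have hB : componentLink E e₂ x ⊆ univ \ {x, y} := fun w hw => by
    have hxw := mem_componentLink.1 hw
    exact mem_U hxw.1.symm (by rintro rfl; exact h₁₂ (h₁.tightRel hunif hxw))
  have hC : componentLink E e₃ y ⊆ univ \ {x, y} := fun w hw => by
    have hyw := mem_componentLink.1 hw
    exact mem_U (by rintro rfl; exact h₁₃ (h₁.symm.tightRel hunif hyw)) hyw.1.symm
  have hAB : Disjoint (codegreeNbhd E x y) (componentLink E e₂ x) := disjoint_left.2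
    fun _ hA hB => h₁₂ ((h₁.of_mem_codegreeNbhd hunif hA).1.tightRel hunif
      (mem_componentLink.1 hB))
  have hAC : Disjoint (codegreeNbhd E x y) (componentLink E e₃ y) := disjoint_left.2
    fun _ hA hC => h₁₃ ((h₁.of_mem_codegreeNbhd hunif hA).2.tightRel hunif
      (mem_componentLink.1 hC))
  have hBC : Disjoint (componentLink E e₂ x) (componentLink E e₃ y) := disjoint_left.2
    fun _ hB hC => by
      have := no_rainbow_triangle hunif hcod h₁ (mem_componentLink.1 hB) (mem_componentLink.1 hC)
      tauto
  have := card_add_card_add_card_le hAB hAC hBC hA hB hC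
  have := hcod x y h₁.1
  have := card_componentLink hunif hcod h₂
  have := card_componentLink hunif hcod h₃
  omega

theorem exists_pairInComponent (hunif : ∀ e ∈ E, #e = 3)
    (hcod : ∀ u v : V, u ≠ v → Fintype.card V / 3 ≤ #(codegreeNbhd E u v))
    (hf : f ∈ E) (hxy : x ≠ y) : ∃ g, PairInComponent E g x y := by
  have h3 : 3 ≤ Fintype.card V := hunif f hf ▸ card_le_univ f
  obtain ⟨w, hw⟩ : (codegreeNbhd E x y).Nonempty := card_pos.1 (by have := hcod x y hxy; omega)
  exact ⟨_, hxy, _, mem_codegreeNbhd.1 hw, by simp, by simp, .refl⟩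

theorem card_componentSupport (hunif : ∀ e ∈ E, #e = 3)
    (hcod : ∀ u v : V, u ≠ v → Fintype.card V / 3 ≤ #(codegreeNbhd E u v)) (he : e ∈ E) :
    Fintype.card V / 3 + 2 ≤ #(componentSupport E e) := by
  obtain ⟨x, y, h⟩ := exists_pairInComponent_of_mem he (by rw [hunif e he]; norm_num)
  have hx : x ∉ componentLink E e x := fun hx => (mem_componentLink.1 hx).1 rfl
  have hsub : insert x (componentLink E e x) ⊆ componentSupport E e := by
    intro z hz
    rw [mem_componentSupport]
    rcases mem_insert.1 hz with rfl | hz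
    exacts [⟨y, h⟩, ⟨x, (mem_componentLink.1 hz).symm⟩]
  calc Fintype.card V / 3 + 2 ≤ #(componentLink E e x) + 1 := by
        have := card_componentLink hunif hcod h; omega
    _ = #(insert x (componentLink E e x)) := (card_insert_of_notMem hx).symm
    _ ≤ _ := card_le_card hsub

theorem disjoint_componentSupport (hunif : ∀ e ∈ E, #e = 3)
    (hcod : ∀ u v : V, u ≠ v → Fintype.card V / 3 ≤ #(codegreeNbhd E u v)) (he₃ : e₃ ∈ E)
    (h₁₂ : ¬TightRel E e₁ e₂) (h₁₃ : ¬TightRel E e₁ e₃) (h₂₃ : ¬TightRel E e₂ e₃) :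
    Disjoint (componentSupport E e₁) (componentSupport E e₂) := by
  refine disjoint_left.2 fun x hx₁ hx₂ => ?_
  obtain ⟨a, ha⟩ := mem_componentSupport.1 hx₁
  obtain ⟨b, hb⟩ := mem_componentSupport.1 hx₂
  obtain ⟨y, c, hc⟩ := exists_pairInComponent_of_mem he₃ (by rw [hunif e₃ he₃]; norm_num)
  rcases eq_or_ne x y with rfl | hxy
  · have := no_three_components_at_vertex hunif hcod ha hb hc
    tauto
  obtain ⟨g, hg⟩ := exists_pairInComponent hunif hcod he₃ hxy
  rcases no_three_components_at_vertex hunif hcod ha hb hg with h | h | h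
  · exact h₁₂ h
  · have := no_rainbow_path hunif hcod (hg.of_tightRel h) hb hc
    tauto
  · rcases no_rainbow_path hunif hcod (hg.of_tightRel h) ha hc with h' | h' | h'
    exacts [h₁₂ h'.symm, h₂₃ h', h₁₃ h']

end Fintype

end

/-- A 3-uniform hypergraph on `n` vertices with minimum codegree at least `⌊n/3⌋` has at
most two tight components: among any three edges, two lie in a common tight component. -/
theorem stmt2 {V : Type*} [Fintype V] [DecidableEq V] (E : Finset (Finset V))
    (hunif : ∀ e ∈ E, e.card = 3)
    (hcod : ∀ u v : V, u ≠ v →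
      Fintype.card V / 3 ≤
        (Finset.univ.filter (fun w => ({u, v, w} : Finset V) ∈ E)).card) :
    ∀ e₁ ∈ E, ∀ e₂ ∈ E, ∀ e₃ ∈ E,
      TightRel E e₁ e₂ ∨ TightRel E e₁ e₃ ∨ TightRel E e₂ e₃ := by
  intro e₁ he₁ e₂ he₂ e₃ he₃
  by_contra! h
  obtain ⟨h₁₂, h₁₃, h₂₃⟩ := h
  have hsum := card_add_card_add_card_le
    (disjoint_componentSupport hunif hcod he₃ h₁₂ h₁₃ h₂₃)
    (disjoint_componentSupport hunif hcod he₂ h₁₃ h₁₂ fun h => h₂₃ h.symm)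
    (disjoint_componentSupport hunif hcod he₁ h₂₃ (fun h => h₁₂ h.symm) fun h => h₁₃ h.symm)
    (subset_univ _) (subset_univ _) (subset_univ _)
  rw [card_univ] at hsum
  have := card_componentSupport hunif hcod he₁
  have := card_componentSupport hunif hcod he₂
  have := card_componentSupport hunif hcod he₃
  omega
end

section
/- For every n divisible by 3, there exists a 3-uniform hypergraph H on n vertices with minimum codegree equal to ⌊n/3⌋ − 1 in which every tight component meets at most 2n/3 vertices. -/
open Finset

lemma card_val_filter (N a b : ℕ) (hb : b ≤ N) :
    ((univ : Finset (Fin N)).filter fun x => a ≤ x.val ∧ x.val < b).card = b - a := by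
  rw [← Nat.card_Ico a b]
  apply Finset.card_bij' (fun x _ => x.val)
    (fun k hk => ⟨k, lt_of_lt_of_le (Finset.mem_Ico.1 hk).2 hb⟩)
  · intro x _; rfl
  · intro k _; rfl
  · intro x hx; simp only [mem_filter] at hx; exact Finset.mem_Ico.2 hx.2
  · intro k hk; simp only [mem_filter, mem_univ, true_and]; exact Finset.mem_Ico.1 hk

/-- For every `n` divisible by 3 (and `n ≥ 3`), there is a 3-uniform hypergraph on `n`
vertices with minimum codegree equal to `⌊n/3⌋ - 1` in which every tight component meets
at most `2n/3` vertices. -/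
theorem stmt4 (n : ℕ) (hn3 : 3 ∣ n) (hn : 3 ≤ n) :
    ∃ E : Finset (Finset (Fin n)),
      (∀ e ∈ E, e.card = 3) ∧
      (∀ u v : Fin n, u ≠ v →
        n / 3 - 1 ≤ (Finset.univ.filter (fun w => ({u, v, w} : Finset (Fin n)) ∈ E)).card) ∧
      (∃ u v : Fin n, u ≠ v ∧
        (Finset.univ.filter (fun w => ({u, v, w} : Finset (Fin n)) ∈ E)).card = n / 3 - 1) ∧
      (∀ e₀ ∈ E,
        {x : Fin n | ∃ e ∈ E, TightRel E e₀ e ∧ x ∈ e}.ncard ≤ 2 * n / 3) := by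
  obtain ⟨m, rfl⟩ := hn3
  have hm : 1 ≤ m := by omega
  -- the class of a vertex
  set cls : Fin (3 * m) → Fin 3 :=
    fun x => if x.val < m then 0 else if x.val < 2 * m then 1 else 2 with hclsdef
  have hcls0 : ∀ x, cls x = 0 ↔ x.val < m := by
    intro x
    simp only [hclsdef]
    split_ifs with h1 h2 <;> simp_all <;> omega
  have hcls1 : ∀ x, cls x = 1 ↔ (m ≤ x.val ∧ x.val < 2 * m) := by
    intro x
    simp only [hclsdef]
    split_ifs with h1 h2 <;> simp_all <;> omega
  have hcls2 : ∀ x, cls x = 2 ↔ 2 * m ≤ x.val := by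
    intro x
    simp only [hclsdef]
    split_ifs with h1 h2 <;> simp_all <;> omega
  -- each class has exactly m vertices
  have hj3 : ∀ k : Fin 3, k = 0 ∨ k = 1 ∨ k = 2 := by decide
  have hVcard : ∀ j : Fin 3, ((univ : Finset (Fin (3 * m))).filter fun x => cls x = j).card = m := by
    intro j
    rcases hj3 j with rfl | rfl | rfl
    · rw [show ((univ : Finset (Fin (3 * m))).filter fun x => cls x = 0)
          = (univ.filter fun x => 0 ≤ x.val ∧ x.val < m) from
        filter_congr (by intro x _; rw [hcls0]; omega)]
      rw [card_val_filter _ 0 m (by omega)]; omega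
    · rw [show ((univ : Finset (Fin (3 * m))).filter fun x => cls x = 1)
          = (univ.filter fun x => m ≤ x.val ∧ x.val < 2 * m) from
        filter_congr (by intro x _; rw [hcls1])]
      rw [card_val_filter _ m (2 * m) (by omega)]; omega
    · rw [show ((univ : Finset (Fin (3 * m))).filter fun x => cls x = 2)
          = (univ.filter fun x => 2 * m ≤ x.val ∧ x.val < 3 * m) from
        filter_congr (by intro x _; rw [hcls2]; have := x.isLt; omega)]
      rw [card_val_filter _ (2 * m) (3 * m) (by omega)]; omega
  -- Fin 3 facts
  have hne1 : ∀ i : Fin 3, i + 1 ≠ i := by decide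
  have hcases3 : ∀ i j : Fin 3, j = i ∨ j = i + 1 ∨ j = i + 2 := by decide
  have hfact1 : ∀ i c : Fin 3, (c = i ∨ c = i + 1) → (c = i + 1 ∨ c = i + 1 + 1) → c = i + 1 := by
    decide
  have hfact2 : ∀ i c : Fin 3, (c = i ∨ c = i + 1) → (c = i + 2 ∨ c = i + 2 + 1) → c = i := by
    decide
  have hsucc2 : ∀ i : Fin 3, i + 2 + 1 = i := by decide
  classical
  -- the edge set
  set E : Finset (Finset (Fin (3 * m))) :=
    univ.filter (fun e => e.card = 3 ∧ ∃ i : Fin 3,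
      (∀ x ∈ e, cls x = i ∨ cls x = i + 1) ∧ 2 ≤ (e.filter fun x => cls x = i).card) with hEdef
  have mem_E : ∀ e, e ∈ E ↔ (e.card = 3 ∧ ∃ i : Fin 3,
      (∀ x ∈ e, cls x = i ∨ cls x = i + 1) ∧ 2 ≤ (e.filter fun x => cls x = i).card) := by
    intro e; simp [hEdef]
  have card3 : ∀ u v w : Fin (3 * m), u ≠ v → u ≠ w → v ≠ w →
      ({u, v, w} : Finset (Fin (3 * m))).card = 3 := by
    intro u v w h1 h2 h3
    rw [card_insert_of_notMem (by simp [h1, h2]),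
      card_insert_of_notMem (by simp [h3]), card_singleton]
  refine ⟨E, ?_, ?_, ?_, ?_⟩
  · intro e he; exact ((mem_E e).1 he).1
  · -- minimum codegree lower bound
    intro u v huv
    have hgoal : (3 * m) / 3 - 1 = m - 1 := by omega
    rw [hgoal]
    rcases hcases3 (cls u) (cls v) with hj | hj | hj
    · -- same class: take all of class i+1
      have hsub : (univ.filter fun w => cls w = cls u + 1) ⊆
          univ.filter (fun w => ({u, v, w} : Finset (Fin (3 * m))) ∈ E) := by
        intro w hw
        simp only [mem_filter, mem_univ, true_and] at hw ⊢
        have hwu : w ≠ u := by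
          intro h; rw [h] at hw; exact hne1 (cls u) hw.symm
        have hwv : w ≠ v := by
          intro h; rw [h, hj] at hw; exact hne1 (cls u) hw.symm
        rw [mem_E]
        refine ⟨card3 u v w huv (Ne.symm hwu) (Ne.symm hwv), cls u, ?_, ?_⟩
        · intro x hx
          simp only [mem_insert, mem_singleton] at hx
          rcases hx with rfl | rfl | rfl
          · exact Or.inl rfl
          · exact Or.inl hj
          · exact Or.inr hw
        · refine Finset.one_lt_card.2 ⟨u, ?_, v, ?_, huv⟩ <;>
            simp [mem_filter, mem_insert, hj]
      calc m - 1 ≤ m := by omega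
        _ = (univ.filter fun w => cls w = cls u + 1).card := (hVcard _).symm
        _ ≤ _ := card_le_card hsub
    · -- v in the next class: take class (cls u) minus u
      have hsub : ((univ.filter fun w => cls w = cls u).erase u) ⊆
          univ.filter (fun w => ({u, v, w} : Finset (Fin (3 * m))) ∈ E) := by
        intro w hw
        rw [mem_erase] at hw
        obtain ⟨hwu, hw⟩ := hw
        simp only [mem_filter, mem_univ, true_and] at hw ⊢
        have hwv : w ≠ v := by
          intro h
          rw [h] at hw
          rw [hw] at hj
          exact hne1 (cls u) hj.symm
        rw [mem_E]
        refine ⟨card3 u v w huv (Ne.symm hwu) (Ne.symm hwv), cls u, ?_, ?_⟩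
        · intro x hx
          simp only [mem_insert, mem_singleton] at hx
          rcases hx with rfl | rfl | rfl
          · exact Or.inl rfl
          · exact Or.inr hj
          · exact Or.inl hw
        · refine Finset.one_lt_card.2 ⟨u, ?_, w, ?_, Ne.symm hwu⟩ <;>
            simp [mem_filter, mem_insert, hw]
      calc m - 1 = ((univ.filter fun w => cls w = cls u).erase u).card := by
            rw [card_erase_of_mem (by simp), hVcard]
        _ ≤ _ := card_le_card hsub
    · -- v in class i+2; then u is in class (cls v) + 1
      have hu' : cls u = cls v + 1 := by rw [hj, hsucc2]
      have hsub : ((univ.filter fun w => cls w = cls v).erase v) ⊆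
          univ.filter (fun w => ({u, v, w} : Finset (Fin (3 * m))) ∈ E) := by
        intro w hw
        rw [mem_erase] at hw
        obtain ⟨hwv, hw⟩ := hw
        simp only [mem_filter, mem_univ, true_and] at hw ⊢
        have hwu : w ≠ u := by
          intro h
          rw [h] at hw
          rw [hw] at hu'
          exact hne1 (cls v) hu'.symm
        rw [mem_E]
        refine ⟨card3 u v w huv (Ne.symm hwu) (Ne.symm hwv), cls v, ?_, ?_⟩
        · intro x hx
          simp only [mem_insert, mem_singleton] at hx
          rcases hx with rfl | rfl | rfl
          · exact Or.inr hu'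
          · exact Or.inl rfl
          · exact Or.inl hw
        · refine Finset.one_lt_card.2 ⟨v, ?_, w, ?_, Ne.symm hwv⟩ <;>
            simp [mem_filter, mem_insert, hw]
      calc m - 1 = ((univ.filter fun w => cls w = cls v).erase v).card := by
            rw [card_erase_of_mem (by simp), hVcard]
        _ ≤ _ := card_le_card hsub
  · -- a pair achieving the minimum codegree
    refine ⟨⟨0, by omega⟩, ⟨m, by omega⟩, ?_, ?_⟩
    · intro h
      have := congrArg Fin.val h
      simp at this; omega
    set u : Fin (3 * m) := ⟨0, by omega⟩
    set v : Fin (3 * m) := ⟨m, by omega⟩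
    have hcu : cls u = 0 := (hcls0 u).2 (by simp [u]; omega)
    have hcv : cls v = 1 := (hcls1 v).2 (by simp [v]; omega)
    have huv : u ≠ v := by
      intro h; have := congrArg Fin.val h; simp [u, v] at this; omega
    have hset : univ.filter (fun w => ({u, v, w} : Finset (Fin (3 * m))) ∈ E)
        = (univ.filter fun w => cls w = 0).erase u := by
      ext w
      simp only [mem_filter, mem_univ, true_and, mem_erase]
      constructor
      · intro hw
        rw [mem_E] at hw
        obtain ⟨hc3, i, hall, h2⟩ := hw
        have hu : cls u = i ∨ cls u = i + 1 := hall u (by simp)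
        have hv : cls v = i ∨ cls v = i + 1 := hall v (by simp)
        rw [hcu] at hu; rw [hcv] at hv
        have hpin : ∀ k : Fin 3, ((0 : Fin 3) = k ∨ (0 : Fin 3) = k + 1) →
            ((1 : Fin 3) = k ∨ (1 : Fin 3) = k + 1) → k = 0 := by decide
        have hi0 : i = 0 := hpin i hu hv
        subst hi0
        have hcw : cls w = 0 := by
          by_contra hcw
          have hsub2 : ({u, v, w} : Finset (Fin (3 * m))).filter (fun x => cls x = 0) ⊆ {u} := by
            intro x hx
            rw [mem_filter] at hx
            simp only [mem_insert, mem_singleton] at hx ⊢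
            rcases hx.1 with rfl | rfl | rfl
            · rfl
            · exact absurd hx.2 (by rw [hcv]; decide)
            · exact absurd hx.2 hcw
          have hle := card_le_card hsub2
          rw [card_singleton] at hle
          omega
        have hwu : w ≠ u := by
          intro h
          rw [h] at hc3
          have heq : ({u, v, u} : Finset (Fin (3 * m))) = {u, v} := by
            ext x; simp; tauto
          rw [heq] at hc3
          have := card_insert_le u ({v} : Finset (Fin (3 * m)))
          rw [card_singleton] at this
          omega
        exact ⟨hwu, hcw⟩
      · rintro ⟨hwu, hw⟩
        have hwv : w ≠ v := by
          intro h
          rw [h] at hw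
          rw [hw] at hcv
          exact absurd hcv (by decide)
        rw [mem_E]
        refine ⟨card3 u v w huv (Ne.symm hwu) (Ne.symm hwv), 0, ?_, ?_⟩
        · intro x hx
          simp only [mem_insert, mem_singleton] at hx
          rcases hx with rfl | rfl | rfl
          · exact Or.inl hcu
          · exact Or.inr hcv
          · exact Or.inl hw
        · refine Finset.one_lt_card.2 ⟨u, ?_, w, ?_, Ne.symm hwu⟩ <;>
            simp [mem_filter, mem_insert, hcu, hw]
    rw [hset, card_erase_of_mem (by simp [hcu]), hVcard]
    omega
  · -- tight components meet at most 2n/3 vertices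
    have overfull : ∀ (s : Finset (Fin (3 * m))) (i j : Fin 3), i ≠ j → s.card = 3 →
        2 ≤ (s.filter fun x => cls x = i).card → 2 ≤ (s.filter fun x => cls x = j).card →
        False := by
      intro s i j hij h3 hi hj
      have hd : Disjoint (s.filter fun x => cls x = i) (s.filter fun x => cls x = j) := by
        rw [Finset.disjoint_left]
        intro a hai haj
        rw [mem_filter] at hai haj
        exact hij (hai.2 ▸ haj.2 ▸ rfl)
      have hcu := Finset.card_union_of_disjoint hd
      have hsub : (s.filter fun x => cls x = i) ∪ (s.filter fun x => cls x = j) ⊆ s :=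
        union_subset (filter_subset _ _) (filter_subset _ _)
      have := card_le_card hsub
      omega
    have step : ∀ i : Fin 3, ∀ f g : Finset (Fin (3 * m)), f ∈ E → g ∈ E →
        (f ∩ g).card = 2 →
        ((∀ x ∈ f, cls x = i ∨ cls x = i + 1) ∧ 2 ≤ (f.filter fun x => cls x = i).card) →
        ((∀ x ∈ g, cls x = i ∨ cls x = i + 1) ∧ 2 ≤ (g.filter fun x => cls x = i).card) := by
      intro i f g hf hg hcard hfI
      obtain ⟨hg3, j, hgI⟩ := (mem_E g).1 hg
      rcases eq_or_ne j i with rfl | hji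
      · exact hgI
      obtain ⟨hf3, -⟩ := (mem_E f).1 hf
      obtain ⟨a, b, hab, habs⟩ := Finset.card_eq_two.1 hcard
      have haf : a ∈ f := (mem_inter.1 (habs ▸ (by simp : a ∈ ({a, b} : Finset _)))).1
      have hag : a ∈ g := (mem_inter.1 (habs ▸ (by simp : a ∈ ({a, b} : Finset _)))).2
      have hbf : b ∈ f := (mem_inter.1 (habs ▸ (by simp : b ∈ ({a, b} : Finset _)))).1
      have hbg : b ∈ g := (mem_inter.1 (habs ▸ (by simp : b ∈ ({a, b} : Finset _)))).2
      have hcaf := hfI.1 a haf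
      have hcbf := hfI.1 b hbf
      have hcag := hgI.1 a hag
      have hcbg := hgI.1 b hbg
      exfalso
      rcases (hcases3 i j).resolve_left hji with rfl | rfl
      · have hca : cls a = i + 1 := hfact1 i _ hcaf hcag
        have hcb : cls b = i + 1 := hfact1 i _ hcbf hcbg
        exact overfull f i (i + 1) (Ne.symm (hne1 i)) hf3 hfI.2
          (Finset.one_lt_card.2 ⟨a, mem_filter.2 ⟨haf, hca⟩, b, mem_filter.2 ⟨hbf, hcb⟩, hab⟩)
      · have hca : cls a = i := hfact2 i _ hcaf hcag
        have hcb : cls b = i := hfact2 i _ hcbf hcbg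
        have hi : i = i + 2 + 1 := (hsucc2 i).symm
        exact overfull g (i + 2) (i + 2 + 1) (Ne.symm (hne1 (i + 2))) hg3 hgI.2
          (Finset.one_lt_card.2 ⟨a, mem_filter.2 ⟨hag, hi ▸ hca⟩,
            b, mem_filter.2 ⟨hbg, hi ▸ hcb⟩, hab⟩)
    intro e₀ he₀
    obtain ⟨-, i, hinv⟩ := (mem_E e₀).1 he₀
    have reach : ∀ e, TightRel E e₀ e →
        ((∀ x ∈ e, cls x = i ∨ cls x = i + 1) ∧ 2 ≤ (e.filter fun x => cls x = i).card) := by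
      intro e h
      induction h with
      | refl => exact hinv
      | tail _ h₂ ih => exact step i _ _ h₂.1 h₂.2.1 h₂.2.2 ih
    have hsub : {x : Fin (3 * m) | ∃ e ∈ E, TightRel E e₀ e ∧ x ∈ e} ⊆
        ↑(univ.filter fun x => cls x = i ∨ cls x = i + 1) := by
      intro x hx
      obtain ⟨e, -, hrel, hxe⟩ := hx
      simp only [Finset.coe_filter, Set.mem_setOf_eq, mem_univ, true_and]
      exact (reach e hrel).1 x hxe
    have h1 : {x : Fin (3 * m) | ∃ e ∈ E, TightRel E e₀ e ∧ x ∈ e}.ncard ≤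
        (univ.filter fun x => cls x = i ∨ cls x = i + 1).card := by
      rw [← Set.ncard_coe_finset]
      exact Set.ncard_le_ncard hsub (Finset.finite_toSet _)
    have h2 : ((univ : Finset (Fin (3 * m))).filter fun x => cls x = i ∨ cls x = i + 1).card
        = 2 * m := by
      rw [filter_or, card_union_of_disjoint (by
        rw [Finset.disjoint_left]
        intro a ha hb
        rw [mem_filter] at ha hb
        exact hne1 i (hb.2 ▸ ha.2 ▸ rfl)), hVcard, hVcard]
      omega
    omega
end

section
/- Let H be an intersecting k-uniform multi-hypergraph with k ≥ 3, and suppose the maximum vertex degree Δ₁(H) satisfies Δ₁(H) < e(H)/(k−1), where e(H) counts edges with multiplicity. Then the underlying simple hypergraph of H is a projective plane of order k−1. (Assume Füredi's theorem: an intersecting k-uniform simple hypergraph containing no projective plane of order k−1 has fractional matching number at most k−1.) -/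
open Finset

/-- A family `L` of finsets is a projective plane of order `s`, viewed as an
`(s+1)`-uniform hypergraph: `s²+s+1` points and lines, every line has `s+1` points,
every point is on `s+1` lines, two points lie on a unique common line, and two lines
meet in a unique point. -/
def IsProjectivePlane {V : Type*} [DecidableEq V] (L : Finset (Finset V)) (s : ℕ) : Prop :=
  L.card = s ^ 2 + s + 1 ∧
  (L.biUnion id).card = s ^ 2 + s + 1 ∧
  (∀ l ∈ L, l.card = s + 1) ∧
  (∀ p ∈ L.biUnion id, (L.filter (fun l => p ∈ l)).card = s + 1) ∧
  (∀ p q, p ∈ L.biUnion id → q ∈ L.biUnion id → p ≠ q →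
    ∃! l, l ∈ L ∧ p ∈ l ∧ q ∈ l) ∧
  (∀ l m, l ∈ L → m ∈ L → l ≠ m → ∃! p, p ∈ l ∧ p ∈ m)

/-- A blocking set of size `s+1` in a projective plane of order `s` is a line. -/
lemma plane_mem_of_blocking {V : Type*} [DecidableEq V] (L : Finset (Finset V)) (s : ℕ)
    (hs : 1 ≤ s) (hP : IsProjectivePlane L s) (e : Finset V) (he : e.card = s + 1)
    (hmeet : ∀ l ∈ L, (l ∩ e).Nonempty) : e ∈ L := by
  classical
  obtain ⟨hLc, hPc, hline, hpoint, hpq, hlm⟩ := hP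
  set P := L.biUnion id with hPdef
  by_contra heL
  have hene : e.Nonempty := Finset.card_pos.mp (by omega)
  obtain ⟨d, hd⟩ := hene
  set f : Finset V → V := fun l => if h : (l ∩ e).Nonempty then h.choose else d with hfdef
  have hf : ∀ l ∈ L, f l ∈ l ∧ f l ∈ e := by
    intro l hl
    have h := hmeet l hl
    have := h.choose_spec
    simp only [hfdef, dif_pos h]
    exact Finset.mem_inter.mp this
  -- key: through any plane point outside e, every line hits e in exactly one point,
  -- and every point of e is hit
  have blk : ∀ x ∈ P, x ∉ e → ∀ p ∈ e,
      ∃ l ∈ L, x ∈ l ∧ p ∈ l ∧ ∀ y ∈ e, y ∈ l → y = p := by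
    intro x hxP hxe
    set Lx := L.filter (fun l => x ∈ l) with hLxdef
    have hLxc : Lx.card = s + 1 := hpoint x hxP
    have hinj : Set.InjOn f Lx := by
      intro l hl m hm hfl
      by_contra hne
      have hl' := Finset.mem_filter.mp hl
      have hm' := Finset.mem_filter.mp hm
      obtain ⟨u, hu, huq⟩ := hlm l m hl'.1 hm'.1 hne
      have h1 : f l = u := huq (f l) ⟨(hf l hl'.1).1, hfl ▸ (hf m hm'.1).1⟩
      have h2 : x = u := huq x ⟨hl'.2, hm'.2⟩
      exact hxe (h2 ▸ h1 ▸ (hf l hl'.1).2)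
    have himg : Lx.image f = e := by
      apply Finset.eq_of_subset_of_card_le
      · intro y hy
        obtain ⟨l, hl, rfl⟩ := Finset.mem_image.mp hy
        exact (hf l (Finset.mem_filter.mp hl).1).2
      · rw [Finset.card_image_of_injOn hinj, hLxc, he]
    intro p hp
    obtain ⟨l, hlLx, hfl⟩ := Finset.mem_image.mp (himg ▸ hp)
    have hl' := Finset.mem_filter.mp hlLx
    refine ⟨l, hl'.1, hl'.2, hfl ▸ (hf l hl'.1).1, ?_⟩
    intro y hy hyl
    obtain ⟨m, hmLx, hfm⟩ := Finset.mem_image.mp (himg ▸ hy)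
    have hm' := Finset.mem_filter.mp hmLx
    have hym : y ∈ m := hfm ▸ (hf m hm'.1).1
    have hyP : y ∈ P := Finset.mem_biUnion.mpr ⟨m, hm'.1, hym⟩
    have hxy : x ≠ y := fun h => hxe (h ▸ hy)
    obtain ⟨n, hn, hnq⟩ := hpq x y hxP hyP hxy
    have h1 : l = n := hnq l ⟨hl'.1, hl'.2, hyl⟩
    have h2 : m = n := hnq m ⟨hm'.1, hm'.2, hym⟩
    rw [← hfm, h2, ← h1, hfl]
  -- every point of e is a point of the plane
  have hnsub : ¬ P ⊆ e := by
    intro h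
    have := Finset.card_le_card h
    rw [hPc, he] at this
    nlinarith
  obtain ⟨x, hxP, hxe⟩ := Finset.not_subset.mp hnsub
  have heP : ∀ p ∈ e, p ∈ P := by
    intro p hp
    obtain ⟨l, hlL, _, hpl, _⟩ := blk x hxP hxe p hp
    exact Finset.mem_biUnion.mpr ⟨l, hlL, hpl⟩
  -- pick two points of e
  obtain ⟨p, hp, q, hq, hpq'⟩ := Finset.one_lt_card.mp (by omega : 1 < e.card)
  obtain ⟨l0, ⟨hl0L, hpl0, hql0⟩, _⟩ := hpq p q (heP p hp) (heP q hq) hpq'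
  have hl0e : l0 ≠ e := fun h => heL (h ▸ hl0L)
  have hl0sub : ¬ l0 ⊆ e := by
    intro h
    exact hl0e (Finset.eq_of_subset_of_card_le h (by rw [he, hline l0 hl0L]))
  obtain ⟨r, hrl0, hre⟩ := Finset.not_subset.mp hl0sub
  have hrP : r ∈ P := Finset.mem_biUnion.mpr ⟨l0, hl0L, hrl0⟩
  obtain ⟨l1, hl1L, hrl1, hpl1, huq⟩ := blk r hrP hre p hp
  have hpr : p ≠ r := fun h => hre (h ▸ hp)
  obtain ⟨n, hn, hnq⟩ := hpq p r (heP p hp) hrP hpr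
  have h1 : l1 = n := hnq l1 ⟨hl1L, hpl1, hrl1⟩
  have h0 : l0 = n := hnq l0 ⟨hl0L, hpl0, hrl0⟩
  have : q = p := huq q hq (by rw [h1, ← h0]; exact hql0)
  exact hpq' this.symm

/-- An intersecting `k`-uniform multi-hypergraph (`k ≥ 3`) with maximum degree
strictly less than `e(H)/(k-1)` has as its underlying simple hypergraph a projective
plane of order `k-1`.  Füredi's theorem (the case `p = 0`) is taken as a hypothesis. -/
theorem stmt9 {V ι : Type*} [Fintype V] [Fintype ι] [DecidableEq V] [Nonempty V]
    (k : ℕ) (hk : 3 ≤ k) (edge : ι → Finset V)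
    (huni : ∀ i, (edge i).card = k)
    (hint : ∀ i j : ι, (edge i ∩ edge j).Nonempty)
    (hFuredi : ∀ E' : Finset (Finset V), (∀ e ∈ E', e.card ≤ k) →
      (∀ e ∈ E', ∀ f ∈ E', (e ∩ f).Nonempty) →
      (¬ ∃ L ⊆ E', IsProjectivePlane L (k - 1)) →
      ∀ w : Finset V → ℚ, (∀ e, 0 ≤ w e) → (∀ e, e ∉ E' → w e = 0) →
        (∀ v : V, ∑ e ∈ E', (if v ∈ e then w e else 0) ≤ 1) →
        ∑ e ∈ E', w e ≤ (k : ℚ) - 1)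
    (hΔ : ∀ v : V, ((Finset.univ.filter (fun i => v ∈ edge i)).card : ℚ) <
      (Fintype.card ι : ℚ) / ((k : ℚ) - 1)) :
    IsProjectivePlane (Finset.univ.image edge) (k - 1) := by
  classical
  set E' : Finset (Finset V) := Finset.univ.image edge with hE'
  have hkQ : (0:ℚ) < (k:ℚ) - 1 := by
    have : (3:ℚ) ≤ (k:ℚ) := by exact_mod_cast hk
    linarith
  -- ι is nonempty
  have hι : 0 < Fintype.card ι := by
    obtain ⟨v0⟩ := (inferInstance : Nonempty V)
    have h1 := hΔ v0
    have h0 : (0:ℚ) ≤ ((Finset.univ.filter (fun i => v0 ∈ edge i)).card : ℚ) := by positivity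
    have h2 : (0:ℚ) < (Fintype.card ι : ℚ) / ((k:ℚ) - 1) := lt_of_le_of_lt h0 h1
    rcases Nat.eq_zero_or_pos (Fintype.card ι) with h | h
    · rw [h] at h2; norm_num at h2
    · exact h
  have : Nonempty ι := Fintype.card_pos_iff.mp hι
  obtain ⟨i0⟩ := this
  set deg : V → ℕ := fun v => (Finset.univ.filter fun i => v ∈ edge i).card with hdegdef
  obtain ⟨vmax, -, hvmax⟩ := Finset.exists_max_image (Finset.univ : Finset V) deg univ_nonempty
  set D := deg vmax with hD
  have hD1 : 1 ≤ D := by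
    have h1 : (edge i0).Nonempty := Finset.card_pos.mp (by rw [huni]; omega)
    obtain ⟨v, hv⟩ := h1
    have h2 : 1 ≤ deg v := Finset.card_pos.mpr ⟨i0, Finset.mem_filter.mpr ⟨Finset.mem_univ _, hv⟩⟩
    exact le_trans h2 (hvmax v (Finset.mem_univ v))
  have hDQ : (0:ℚ) < (D:ℚ) := by exact_mod_cast hD1
  set mult : Finset V → ℕ := fun e => (Finset.univ.filter fun i => edge i = e).card with hmult
  have htot : ∑ e ∈ E', mult e = Fintype.card ι := by
    rw [← Finset.card_univ]
    exact (Finset.card_eq_sum_card_fiberwise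
      (fun i _ => Finset.mem_image_of_mem edge (Finset.mem_univ i))).symm
  have hdeg : ∀ v, ∑ e ∈ E', (if v ∈ e then mult e else 0) = deg v := by
    intro v
    have h1 : deg v = ∑ e ∈ E',
        ((Finset.univ.filter fun i => v ∈ edge i).filter fun i => edge i = e).card :=
      Finset.card_eq_sum_card_fiberwise
        (fun i _ => Finset.mem_image_of_mem edge (Finset.mem_univ i))
    rw [h1]
    refine (Finset.sum_congr rfl ?_).symm
    intro e _
    by_cases hv : v ∈ e
    · rw [if_pos hv]
      congr 1
      ext i
      simp only [Finset.mem_filter, Finset.mem_univ, true_and]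
      constructor
      · rintro ⟨_, h⟩; exact h
      · intro h; exact ⟨by rw [h]; exact hv, h⟩
    · rw [if_neg hv]
      have hz : ((Finset.univ.filter fun i => v ∈ edge i).filter fun i => edge i = e) = ∅ := by
        rw [Finset.filter_eq_empty_iff]
        intro i hi h
        exact hv (h ▸ (Finset.mem_filter.mp hi).2)
      rw [hz, Finset.card_empty]
  -- obtain the projective plane inside E'
  have hLex : ∃ L ⊆ E', IsProjectivePlane L (k - 1) := by
    by_contra hno
    have hcard : ∀ e ∈ E', e.card ≤ k := by
      intro e he
      obtain ⟨i, _, rfl⟩ := Finset.mem_image.mp he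
      exact (huni i).le
    have hint' : ∀ e ∈ E', ∀ f ∈ E', (e ∩ f).Nonempty := by
      intro e he f hf
      obtain ⟨i, _, rfl⟩ := Finset.mem_image.mp he
      obtain ⟨j, _, rfl⟩ := Finset.mem_image.mp hf
      exact hint i j
    have hw0 : ∀ e : Finset V, (0:ℚ) ≤ (mult e : ℚ) / (D:ℚ) := by
      intro e; positivity
    have hwz : ∀ e : Finset V, e ∉ E' → (mult e : ℚ) / (D:ℚ) = 0 := by
      intro e he
      have : mult e = 0 := by
        rw [hmult]
        rw [Finset.card_eq_zero, Finset.filter_eq_empty_iff]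
        intro i _ h
        exact he (h ▸ Finset.mem_image_of_mem edge (Finset.mem_univ i))
      rw [this]; simp
    have hvert : ∀ v : V, ∑ e ∈ E', (if v ∈ e then (mult e : ℚ) / (D:ℚ) else 0) ≤ 1 := by
      intro v
      have heq : ∑ e ∈ E', (if v ∈ e then (mult e : ℚ) / (D:ℚ) else 0)
          = (deg v : ℚ) / (D:ℚ) := by
        rw [← hdeg v]
        push_cast
        rw [Finset.sum_div]
        refine Finset.sum_congr rfl ?_
        intro e _
        by_cases hv : v ∈ e <;> simp [hv]
      rw [heq, div_le_one hDQ]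
      exact_mod_cast hvmax v (Finset.mem_univ v)
    have hconc := hFuredi E' hcard hint' hno (fun e => (mult e : ℚ) / (D:ℚ))
      hw0 hwz hvert
    have hsum : ∑ e ∈ E', (mult e : ℚ) / (D:ℚ) = (Fintype.card ι : ℚ) / (D:ℚ) := by
      rw [← Finset.sum_div]
      congr 1
      rw [← htot]
      push_cast
      rfl
    rw [hsum, div_le_iff₀ hDQ] at hconc
    have hmax := hΔ vmax
    rw [lt_div_iff₀ hkQ] at hmax
    have : ((Finset.univ.filter (fun i => vmax ∈ edge i)).card : ℚ) = (D:ℚ) := by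
      rw [hD, hdegdef]
    rw [this] at hmax
    nlinarith
  obtain ⟨L, hLE, hP⟩ := hLex
  have hs1 : 1 ≤ k - 1 := by omega
  have hEL : E' ⊆ L := by
    intro e he
    refine plane_mem_of_blocking L (k - 1) hs1 hP e ?_ ?_
    · obtain ⟨i, _, rfl⟩ := Finset.mem_image.mp he
      rw [huni]; omega
    · intro l hl
      have hlE := hLE hl
      obtain ⟨j, _, rfl⟩ := Finset.mem_image.mp hlE
      obtain ⟨i, _, rfl⟩ := Finset.mem_image.mp he
      exact hint j i
  have hLeq : L = E' := Finset.Subset.antisymm hLE hEL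
  exact hLeq ▸ hP
end

section
/- Let H be an intersecting k-uniform multi-hypergraph with k ≥ 3. Then Δ₁(H) ≥ e(H)/(k − 1 + p/k), where p = 1 if a projective plane of order k−1 exists and p = 0 otherwise. (Assume Füredi's theorem: if an intersecting hypergraph with edges of size at most k contains no p+1 vertex-disjoint projective planes of order k−1, then its fractional matching number is at most (k−1) + p/k.) -/
open Finset

lemma pp_map {V W : Type*} [DecidableEq V] [DecidableEq W] (g : V ↪ W)
    {L : Finset (Finset V)} {s : ℕ} (h : IsProjectivePlane L s) :
    IsProjectivePlane (L.image (fun l => l.map g)) s := by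
  obtain ⟨h1, h2, h3, h4, h5, h6⟩ := h
  have hinj : Function.Injective (fun l : Finset V => l.map g) :=
    fun a b hab => Finset.map_injective g hab
  have hbu : (L.image (fun l => l.map g)).biUnion id = (L.biUnion id).map g := by
    ext x
    simp only [mem_biUnion, mem_image, mem_map, id]
    constructor
    · rintro ⟨l', ⟨l, hl, rfl⟩, hx⟩
      simp only [mem_map] at hx
      obtain ⟨y, hy, rfl⟩ := hx
      exact ⟨y, ⟨l, hl, hy⟩, rfl⟩
    · rintro ⟨y, ⟨l, hl, hy⟩, rfl⟩
      exact ⟨l.map g, ⟨l, hl, rfl⟩, by simp [hy]⟩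
  refine ⟨by rw [Finset.card_image_of_injective _ hinj]; exact h1,
    by rw [hbu, Finset.card_map]; exact h2, ?_, ?_, ?_, ?_⟩
  · rintro l' hl'
    obtain ⟨l, hl, rfl⟩ := mem_image.1 hl'
    rw [Finset.card_map]; exact h3 l hl
  · intro q hq
    rw [hbu, mem_map] at hq
    obtain ⟨x, hx, rfl⟩ := hq
    have : (L.image (fun l => l.map g)).filter (fun l => g x ∈ l)
        = (L.filter (fun l => x ∈ l)).image (fun l => l.map g) := by
      ext l'
      simp only [mem_filter, mem_image]
      constructor
      · rintro ⟨⟨l, hl, rfl⟩, hx'⟩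
        simp only [mem_map] at hx'
        obtain ⟨y, hy, hyx⟩ := hx'
        have := g.injective hyx
        subst this
        exact ⟨l, ⟨hl, hy⟩, rfl⟩
      · rintro ⟨l, ⟨hl, hx'⟩, rfl⟩
        exact ⟨⟨l, hl, rfl⟩, by simp [hx']⟩
    rw [this, Finset.card_image_of_injective _ hinj]
    exact h4 x hx
  · intro q r hq hr hqr
    rw [hbu, mem_map] at hq hr
    obtain ⟨x, hx, rfl⟩ := hq
    obtain ⟨y, hy, rfl⟩ := hr
    have hxy : x ≠ y := fun h => hqr (by rw [h])
    obtain ⟨l, ⟨hl, hxl, hyl⟩, hun⟩ := h5 x y hx hy hxy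
    refine ⟨l.map g, ⟨mem_image_of_mem _ hl, by simp [hxl], by simp [hyl]⟩, ?_⟩
    rintro l' ⟨hl', hx', hy'⟩
    obtain ⟨m, hm, rfl⟩ := mem_image.1 hl'
    simp only [mem_map] at hx' hy'
    obtain ⟨x', hx'm, hxx⟩ := hx'
    obtain ⟨y', hy'm, hyy⟩ := hy'
    have := g.injective hxx; subst this
    have := g.injective hyy; subst this
    rw [hun m ⟨hm, hx'm, hy'm⟩]
  · intro l' m' hl' hm' hne
    obtain ⟨l, hl, rfl⟩ := mem_image.1 hl'
    obtain ⟨m, hm, rfl⟩ := mem_image.1 hm'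
    have hlm : l ≠ m := fun h => hne (by rw [h])
    obtain ⟨x, ⟨hxl, hxm⟩, hun⟩ := h6 l m hl hm hlm
    refine ⟨g x, ⟨by simp [hxl], by simp [hxm]⟩, ?_⟩
    rintro q ⟨hql, hqm⟩
    simp only [mem_map] at hql hqm
    obtain ⟨a, ha, rfl⟩ := hql
    obtain ⟨b, hb, hba⟩ := hqm
    obtain rfl : b = a := g.injective hba
    rw [hun b ⟨ha, hb⟩]

/-- Any intersecting `k`-uniform multi-hypergraph (`k ≥ 3`) has a vertex of degree at
least `e(H)/(k - 1 + p/k)`, where `p = 1` if a projective plane of order `k-1` exists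
and `p = 0` otherwise.  Füredi's theorem is taken as a hypothesis. -/
theorem stmt10 {V ι : Type*} [Fintype V] [Fintype ι] [DecidableEq V] [Nonempty V]
    (k p : ℕ) (hk : 3 ≤ k) (edge : ι → Finset V)
    (huni : ∀ i, (edge i).card = k)
    (hint : ∀ i j : ι, (edge i ∩ edge j).Nonempty)
    (hp01 : p = 0 ∨ p = 1)
    (hpdef : p = 1 ↔ ∃ L : Finset (Finset ℕ), IsProjectivePlane L (k - 1))
    (hFuredi : ∀ E' : Finset (Finset V), (∀ e ∈ E', e.card ≤ k) →
      (∀ e ∈ E', ∀ f ∈ E', (e ∩ f).Nonempty) →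
      (¬ ∃ f : Fin (p + 1) → Finset (Finset V), (∀ i, f i ⊆ E') ∧
        (∀ i, IsProjectivePlane (f i) (k - 1)) ∧
        (∀ i j, i ≠ j → Disjoint ((f i).biUnion id) ((f j).biUnion id))) →
      ∀ w : Finset V → ℚ, (∀ e, 0 ≤ w e) → (∀ e, e ∉ E' → w e = 0) →
        (∀ v : V, ∑ e ∈ E', (if v ∈ e then w e else 0) ≤ 1) →
        ∑ e ∈ E', w e ≤ ((k : ℚ) - 1) + (p : ℚ) / (k : ℚ)) :
    ∃ v : V, (Fintype.card ι : ℚ) / ((k : ℚ) - 1 + (p : ℚ) / (k : ℚ)) ≤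
      ((Finset.univ.filter (fun i => v ∈ edge i)).card : ℚ) := by
  classical
  have hkQ : (0:ℚ) < (k:ℚ) := by exact_mod_cast show 0 < k by omega
  have hC : (0:ℚ) < (k : ℚ) - 1 + (p : ℚ) / (k : ℚ) := by
    have : (3:ℚ) ≤ (k:ℚ) := by exact_mod_cast hk
    have : (0:ℚ) ≤ (p:ℚ)/(k:ℚ) := by positivity
    linarith
  rcases isEmpty_or_nonempty ι with hι | hι
  · obtain ⟨v⟩ := ‹Nonempty V›
    refine ⟨v, ?_⟩
    rw [Fintype.card_eq_zero]
    simp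
  -- degree function and max degree
  set deg : V → ℕ := fun v => (Finset.univ.filter (fun i => v ∈ edge i)).card with hdeg
  obtain ⟨v, hv⟩ := Finset.exists_mem_eq_sup (Finset.univ : Finset V) Finset.univ_nonempty deg
  set D := Finset.univ.sup deg with hDdef
  have hdegD : ∀ u : V, deg u ≤ D := fun u => Finset.le_sup (Finset.mem_univ u)
  have hDpos : 0 < D := by
    obtain ⟨i⟩ := hι
    obtain ⟨x, hx⟩ : (edge i).Nonempty := by
      rw [← Finset.card_pos, huni]; omega
    have : 0 < deg x := Finset.card_pos.2 ⟨i, by simp [hx]⟩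
    exact lt_of_lt_of_le this (hdegD x)
  have hDQ : (0:ℚ) < (D:ℚ) := by exact_mod_cast hDpos
  set E' : Finset (Finset V) := Finset.univ.image edge with hE'
  set mult : Finset V → ℕ := fun e => (Finset.univ.filter (fun i => edge i = e)).card
  -- no p+1 disjoint planes
  have hnp : ¬ ∃ f : Fin (p + 1) → Finset (Finset V), (∀ i, f i ⊆ E') ∧
      (∀ i, IsProjectivePlane (f i) (k - 1)) ∧
      (∀ i j, i ≠ j → Disjoint ((f i).biUnion id) ((f j).biUnion id)) := by
    rintro ⟨f, hfs, hfp, hfd⟩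
    rcases hp01 with rfl | rfl
    · have g : V ↪ ℕ := (Fintype.equivFin V).toEmbedding.trans (Fin.valEmbedding)
      have h01 := hpdef.2 ⟨_, pp_map g (hfp 0)⟩
      omega
    · have hne : ∀ i : Fin 2, (f i).Nonempty := by
        intro i
        rw [← Finset.card_pos, (hfp i).1]
        positivity
      obtain ⟨l, hl⟩ := hne 0
      obtain ⟨m, hm⟩ := hne 1
      obtain ⟨i0, -, hi0⟩ := Finset.mem_image.1 (hfs 0 hl)
      obtain ⟨j0, -, hj0⟩ := Finset.mem_image.1 (hfs 1 hm)
      obtain ⟨x, hx⟩ := hint i0 j0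
      rw [Finset.mem_inter, hi0, hj0] at hx
      have h0 : x ∈ (f 0).biUnion id := Finset.mem_biUnion.2 ⟨l, hl, hx.1⟩
      have h1 : x ∈ (f 1).biUnion id := Finset.mem_biUnion.2 ⟨m, hm, hx.2⟩
      exact Finset.disjoint_left.1 (hfd 0 1 (by decide)) h0 h1
  -- fiber decompositions
  have hsum : Fintype.card ι = ∑ e ∈ E', mult e := by
    rw [← Finset.card_univ]
    exact Finset.card_eq_sum_card_fiberwise
      (fun i _ => Finset.mem_image_of_mem edge (Finset.mem_univ i))
  have hdegsum : ∀ u : V, deg u = ∑ e ∈ E', (if u ∈ e then mult e else 0) := by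
    intro u
    have h1 : deg u = ∑ e ∈ E',
        ((Finset.univ.filter (fun i => u ∈ edge i)).filter (fun i => edge i = e)).card :=
      Finset.card_eq_sum_card_fiberwise
        (fun i _ => Finset.mem_image_of_mem edge (Finset.mem_univ i))
    rw [h1]
    refine Finset.sum_congr rfl (fun e he => ?_)
    by_cases hue : u ∈ e
    · rw [if_pos hue]
      congr 1
      ext i
      simp only [Finset.mem_filter, Finset.mem_univ, true_and]
      constructor
      · exact fun h => h.2
      · intro h; exact ⟨h ▸ hue, h⟩
    · rw [if_neg hue, Finset.card_eq_zero]
      ext i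
      simp only [Finset.mem_filter, Finset.mem_univ, true_and, Finset.notMem_empty, iff_false]
      rintro ⟨h1', h2'⟩
      exact hue (h2' ▸ h1')
  -- apply Füredi
  set w : Finset V → ℚ := fun e => if e ∈ E' then (mult e : ℚ)/(D:ℚ) else 0 with hw
  have hkey := hFuredi E'
    (by rintro e he; obtain ⟨i, -, rfl⟩ := Finset.mem_image.1 he; exact le_of_eq (huni i))
    (by rintro e he f hf
        obtain ⟨i, -, rfl⟩ := Finset.mem_image.1 he
        obtain ⟨j, -, rfl⟩ := Finset.mem_image.1 hf
        exact hint i j)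
    hnp w
    (by intro e; rw [hw]; dsimp only; split <;> positivity)
    (by intro e he; rw [hw]; dsimp only; rw [if_neg he])
    (by intro u
        have : ∑ e ∈ E', (if u ∈ e then w e else 0) = (deg u : ℚ) / D := by
          rw [hdegsum u]
          push_cast
          rw [Finset.sum_div]
          refine Finset.sum_congr rfl (fun e he => ?_)
          rw [hw]; dsimp only
          rw [if_pos he]
          split <;> simp
        rw [this, div_le_one hDQ]
        exact_mod_cast hdegD u)
  have htot : ∑ e ∈ E', w e = (Fintype.card ι : ℚ) / D := by
    rw [hsum]
    push_cast
    rw [Finset.sum_div]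
    refine Finset.sum_congr rfl (fun e he => ?_)
    rw [hw]; dsimp only; rw [if_pos he]
  rw [htot] at hkey
  refine ⟨v, ?_⟩
  have hDv : (D:ℚ) = ((Finset.univ.filter (fun i => v ∈ edge i)).card : ℚ) := by
    exact_mod_cast hv.2
  rw [← hDv]
  rw [div_le_iff₀ hC]
  rw [div_le_iff₀ hDQ] at hkey
  linarith [mul_comm (D:ℚ) ((k : ℚ) - 1 + (p : ℚ) / (k : ℚ))]
end
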